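/- arXiv:0801.1341 — 4 statements merged into one kernel-verified Lean document; each statement's English description precedes it below -/
import Mathlib

section
/- Let F, G : ℝ → ℝ be smooth (C^∞) functions and define u(x,y) = −2(F(x) + G(y))/(x + y) + F'(x) + G'(y) for x + y ≠ 0. Then at every point (x,y) with x + y ≠ 0, the mixed partial derivative satisfies ∂²u/∂x∂y = (2/(x+y)²)·u(x,y); that is, u solves the linear PDE u_{xy} − (2/(x+y)²) u = 0. -/
/-- The function `u(x,y) = −2(F(x)+G(y))/(x+y) + F'(x) + G'(y)` solves the PDE
`u_{xy} = (2/(x+y)²) u` on the set `x + y ≠ 0`, for smooth `F`, `G`. -/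
theorem laplace_c2_complete_solution (F G : ℝ → ℝ)
    (hF : ContDiff ℝ (⊤ : ℕ∞) F) (hG : ContDiff ℝ (⊤ : ℕ∞) G) (x y : ℝ) (hxy : x + y ≠ 0) :
    deriv (fun s => deriv
        (fun t => -2 * (F t + G s) / (t + s) + deriv F t + deriv G s) x) y
      = (2 / (x + y) ^ 2) *
        (-2 * (F x + G y) / (x + y) + deriv F x + deriv G y) := by
  have hFd : Differentiable ℝ F := hF.differentiable (by simp)
  have hFd2 : Differentiable ℝ (deriv F) :=
    ((contDiff_infty_iff_deriv.mp (hF.of_le (by simp))).2).differentiable (by simp)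
  have hGd : Differentiable ℝ G := hG.differentiable (by simp)
  -- explicit formula for the inner derivative
  set g : ℝ → ℝ := fun s =>
    ((-2 * deriv F x) * (x + s) + 2 * (F x + G s)) / (x + s) ^ 2
      + deriv (deriv F) x with hg
  have key : ∀ s : ℝ, x + s ≠ 0 →
      deriv (fun t => -2 * (F t + G s) / (t + s) + deriv F t + deriv G s) x
        = g s := by
    intro s hs
    have h1 : HasDerivAt (fun t => -2 * (F t + G s)) (-2 * deriv F x) x := by
      have := ((hFd x).hasDerivAt.add_const (G s)).const_mul (-2 : ℝ)
      simpa using this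
    have h2 : HasDerivAt (fun t : ℝ => t + s) 1 x := by
      simpa using (hasDerivAt_id x).add_const s
    have h3 := h1.div h2 hs
    have h4 : HasDerivAt
        (fun t => -2 * (F t + G s) / (t + s) + deriv F t + deriv G s)
        ((-2 * deriv F x * (x + s) - -2 * (F x + G s) * 1) / (x + s) ^ 2
          + deriv (deriv F) x) x :=
      (h3.add (hFd2 x).hasDerivAt).add_const (deriv G s)
    rw [h4.deriv, hg]
    ring
  have hev : (fun s => deriv
      (fun t => -2 * (F t + G s) / (t + s) + deriv F t + deriv G s) x)
      =ᶠ[nhds y] g := by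
    have hopen : ∀ᶠ s in nhds y, x + s ≠ 0 := by
      have : Continuous fun s : ℝ => x + s := by continuity
      exact this.continuousAt.eventually_ne hxy
    filter_upwards [hopen] with s hs using key s hs
  rw [hev.deriv_eq]
  -- now differentiate g at y
  have hs : (x + y) ^ 2 ≠ 0 := pow_ne_zero _ hxy
  have hnum : HasDerivAt (fun s => (-2 * deriv F x) * (x + s) + 2 * (F x + G s))
      ((-2 * deriv F x) * 1 + 2 * deriv G y) y := by
    have ha : HasDerivAt (fun s : ℝ => (-2 * deriv F x) * (x + s))
        ((-2 * deriv F x) * 1) y := by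
      have := ((hasDerivAt_id y).const_add x).const_mul (-2 * deriv F x)
      simpa using this
    have hb : HasDerivAt (fun s => 2 * (F x + G s)) (2 * deriv G y) y := by
      have := ((hGd y).hasDerivAt.const_add (F x)).const_mul (2 : ℝ)
      simpa using this
    exact ha.add hb
  have hden : HasDerivAt (fun s : ℝ => (x + s) ^ 2) (2 * (x + y) ^ 1 * 1) y := by
    exact ((hasDerivAt_id y).const_add x).pow 2
  have hgd : HasDerivAt g
      ((((-2 * deriv F x) * 1 + 2 * deriv G y) * (x + y) ^ 2
        - ((-2 * deriv F x) * (x + y) + 2 * (F x + G y)) * (2 * (x + y) ^ 1 * 1))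
        / ((x + y) ^ 2) ^ 2) y := by
    have := (hnum.div hden hs).add_const (deriv (deriv F) x)
    simpa [hg] using this
  rw [hgd.deriv]
  field_simp
  ring
end

section
/- Let F, G : ℝ → ℝ be smooth (C^∞) functions and define u(x,y) = 12(F(x) + G(y))/(x + y)² − 6(F'(x) + G'(y))/(x + y) + F''(x) + G''(y) for x + y ≠ 0. Then at every point (x,y) with x + y ≠ 0, u satisfies ∂²u/∂x∂y = (6/(x+y)²)·u(x,y); that is, u solves the linear PDE u_{xy} − (6/(x+y)²) u = 0. -/
private lemma inner_deriv (F G : ℝ → ℝ) (hF : ContDiff ℝ (⊤ : ℕ∞) F) (x s : ℝ) (h : x + s ≠ 0) :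
    deriv (fun t => 12 * (F t + G s) / (t + s) ^ 2
          - 6 * (deriv F t + deriv G s) / (t + s)
          + deriv (deriv F) t + deriv (deriv G) s) x
    = 12 * deriv F x / (x + s) ^ 2 - 24 * (F x + G s) / (x + s) ^ 3
      - 6 * deriv (deriv F) x / (x + s) + 6 * (deriv F x + deriv G s) / (x + s) ^ 2
      + deriv (deriv (deriv F)) x := by
  have hFi : ContDiff ℝ ((⊤ : ℕ∞) : WithTop ℕ∞) F := hF.of_le (by simp)
  have hF1 : ContDiff ℝ ((⊤ : ℕ∞) : WithTop ℕ∞) (deriv F) := (contDiff_infty_iff_deriv.mp hFi).2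
  have hF2 : ContDiff ℝ ((⊤ : ℕ∞) : WithTop ℕ∞) (deriv (deriv F)) := (contDiff_infty_iff_deriv.mp hF1).2
  have dF : HasDerivAt F (deriv F x) x := (hFi.differentiable (by simp) x).hasDerivAt
  have dF1 : HasDerivAt (deriv F) (deriv (deriv F) x) x :=
    (hF1.differentiable (by simp) x).hasDerivAt
  have dF2 : HasDerivAt (deriv (deriv F)) (deriv (deriv (deriv F)) x) x :=
    (hF2.differentiable (by simp) x).hasDerivAt
  have hden : HasDerivAt (fun t : ℝ => (t + s) ^ 2) (2 * (x + s) ^ 1 * 1) x :=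
    ((hasDerivAt_id x).add_const s).pow 2
  have hden1 : HasDerivAt (fun t : ℝ => t + s) 1 x := (hasDerivAt_id x).add_const s
  have h2 : (x + s) ^ 2 ≠ 0 := pow_ne_zero _ h
  have T1 : HasDerivAt (fun t => 12 * (F t + G s) / (t + s) ^ 2)
      ((12 * deriv F x * (x + s) ^ 2 - 12 * (F x + G s) * (2 * (x + s) ^ 1 * 1)) /
        ((x + s) ^ 2) ^ 2) x :=
    ((dF.add_const (G s)).const_mul 12).div hden h2
  have T2 : HasDerivAt (fun t => 6 * (deriv F t + deriv G s) / (t + s))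
      ((6 * deriv (deriv F) x * (x + s) - 6 * (deriv F x + deriv G s) * 1) / (x + s) ^ 2) x :=
    ((dF1.add_const (deriv G s)).const_mul 6).div hden1 h
  have H := ((T1.sub T2).add dF2).add_const (deriv (deriv G) s)
  erw [H.deriv]
  field_simp
  ring

/-- The function `u(x,y) = 12(F(x)+G(y))/(x+y)² − 6(F'(x)+G'(y))/(x+y) + F''(x) + G''(y)`
solves the PDE `u_{xy} = (6/(x+y)²) u` on the set `x + y ≠ 0`, for smooth `F`, `G`. -/
theorem laplace_c6_complete_solution (F G : ℝ → ℝ)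
    (hF : ContDiff ℝ (⊤ : ℕ∞) F) (hG : ContDiff ℝ (⊤ : ℕ∞) G) (x y : ℝ) (hxy : x + y ≠ 0) :
    deriv (fun s => deriv
        (fun t => 12 * (F t + G s) / (t + s) ^ 2
          - 6 * (deriv F t + deriv G s) / (t + s)
          + deriv (deriv F) t + deriv (deriv G) s) x) y
      = (6 / (x + y) ^ 2) *
        (12 * (F x + G y) / (x + y) ^ 2
          - 6 * (deriv F x + deriv G y) / (x + y)
          + deriv (deriv F) x + deriv (deriv G) y) := by
  have hGi : ContDiff ℝ ((⊤ : ℕ∞) : WithTop ℕ∞) G := hG.of_le (by simp)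
  have hG1 : ContDiff ℝ ((⊤ : ℕ∞) : WithTop ℕ∞) (deriv G) := (contDiff_infty_iff_deriv.mp hGi).2
  have hne : ∀ᶠ s in nhds y, x + s ≠ 0 := by
    have hc : ContinuousAt (fun s : ℝ => x + s) y := by fun_prop
    exact hc.eventually_ne hxy
  have hEq : (fun s => deriv
        (fun t => 12 * (F t + G s) / (t + s) ^ 2
          - 6 * (deriv F t + deriv G s) / (t + s)
          + deriv (deriv F) t + deriv (deriv G) s) x)
      =ᶠ[nhds y] (fun s =>
        12 * deriv F x / (x + s) ^ 2 - 24 * (F x + G s) / (x + s) ^ 3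
        - 6 * deriv (deriv F) x / (x + s) + 6 * (deriv F x + deriv G s) / (x + s) ^ 2
        + deriv (deriv (deriv F)) x) :=
    hne.mono fun s hs => inner_deriv F G hF x s hs
  rw [hEq.deriv_eq]
  have dG : HasDerivAt G (deriv G y) y := (hGi.differentiable (by simp) y).hasDerivAt
  have dG1 : HasDerivAt (deriv G) (deriv (deriv G) y) y :=
    (hG1.differentiable (by simp) y).hasDerivAt
  have hid : HasDerivAt (fun s : ℝ => x + s) 1 y := (hasDerivAt_id y).const_add x
  have hden2 : HasDerivAt (fun s : ℝ => (x + s) ^ 2) (2 * (x + y) ^ 1 * 1) y := hid.pow 2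
  have hden3 : HasDerivAt (fun s : ℝ => (x + s) ^ 3) (3 * (x + y) ^ 2 * 1) y := hid.pow 3
  have h1 : (x + y) ≠ 0 := hxy
  have h2 : (x + y) ^ 2 ≠ 0 := pow_ne_zero _ hxy
  have h3 : (x + y) ^ 3 ≠ 0 := pow_ne_zero _ hxy
  have T1 : HasDerivAt (fun s => 12 * deriv F x / (x + s) ^ 2)
      ((0 * (x + y) ^ 2 - 12 * deriv F x * (2 * (x + y) ^ 1 * 1)) / ((x + y) ^ 2) ^ 2) y :=
    (hasDerivAt_const y (12 * deriv F x)).div hden2 h2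
  have T2 : HasDerivAt (fun s => 24 * (F x + G s) / (x + s) ^ 3)
      ((24 * deriv G y * (x + y) ^ 3 - 24 * (F x + G y) * (3 * (x + y) ^ 2 * 1)) /
        ((x + y) ^ 3) ^ 2) y :=
    ((dG.const_add (F x)).const_mul 24).div hden3 h3
  have T3 : HasDerivAt (fun s => 6 * deriv (deriv F) x / (x + s))
      ((0 * (x + y) - 6 * deriv (deriv F) x * 1) / (x + y) ^ 2) y :=
    (hasDerivAt_const y (6 * deriv (deriv F) x)).div hid h1
  have T4 : HasDerivAt (fun s => 6 * (deriv F x + deriv G s) / (x + s) ^ 2)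
      ((6 * deriv (deriv G) y * (x + y) ^ 2 - 6 * (deriv F x + deriv G y) * (2 * (x + y) ^ 1 * 1)) /
        ((x + y) ^ 2) ^ 2) y :=
    ((dG1.const_add (deriv F x)).const_mul 6).div hden2 h2
  have H := (((T1.sub T2).sub T3).add T4).add_const (deriv (deriv (deriv F)) x)
  erw [H.deriv]
  field_simp
  ring
end

section
/- Let φ : ℝ × ℝ → ℝ be C¹ and ψ : ℝ × ℝ → ℝ be arbitrary, and define v : ℝ³ → ℝ by v(x,y,z) = ∫₀ˣ φ(t, t·y − z) dt + ψ(y,z). Then ∂_x v(x,y,z) = φ(x, x·y − z) at every point, and v satisfies the equation X₂(X₁v) = 0 at every point; explicitly, ∂_y(∂_x v)(x,y,z) + x·∂_z(∂_x v)(x,y,z) = 0. (This gives the complete solution v of the transformed Dini equation, with φ solving X₂φ = 0 along characteristics and ψ solving X₁ψ = 0.) -/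
/-! The integral term has `x`-derivative `φ(x, xy − z)` by the fundamental theorem of calculus,
and `ψ(y, z)` does not depend on `x`. The function `φ(x, xy − z)` is constant along the
characteristics of `X₂ = ∂_y + x ∂_z`: by the chain rule both `∂_y` and `x ∂_z` of it are
`x ∂₂φ(x, xy − z)`, with opposite signs. -/

open MeasureTheory

/-- Partial derivative in the first coordinate of a function on `ℝ³`. -/
noncomputable def pdx (u : ℝ × ℝ × ℝ → ℝ) : ℝ × ℝ × ℝ → ℝ :=
  fun p => deriv (fun t => u (t, p.2.1, p.2.2)) p.1

/-- Partial derivative in the second coordinate of a function on `ℝ³`. -/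
noncomputable def pdy (u : ℝ × ℝ × ℝ → ℝ) : ℝ × ℝ × ℝ → ℝ :=
  fun p => deriv (fun t => u (p.1, t, p.2.2)) p.2.1

/-- Partial derivative in the third coordinate of a function on `ℝ³`. -/
noncomputable def pdz (u : ℝ × ℝ × ℝ → ℝ) : ℝ × ℝ × ℝ → ℝ :=
  fun p => deriv (fun t => u (p.1, p.2.1, t)) p.2.2

theorem pdx_eq_of_eq_intervalIntegral_add {v : ℝ × ℝ × ℝ → ℝ} {g : ℝ → ℝ × ℝ → ℝ}
    (hg : ∀ q, Continuous fun t => g t q) (c : ℝ × ℝ → ℝ)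
    (hv : ∀ p : ℝ × ℝ × ℝ, v p = (∫ t in (0:ℝ)..p.1, g t p.2) + c p.2)
    (p : ℝ × ℝ × ℝ) : pdx v p = g p.1 p.2 := by
  obtain ⟨x, q⟩ := p
  have hv_line : (fun t => v (t, q)) = fun t => (∫ s in (0:ℝ)..t, g s q) + c q :=
    funext fun t => hv (t, q)
  simp only [pdx, hv_line, deriv_add_const]
  exact (hg q).deriv_integral _ 0 x

theorem hasDerivAt_apply_mk_right {E : Type*} [NormedAddCommGroup E] [NormedSpace ℝ E]
    {φ : ℝ × ℝ → E} {a : ℝ} {g : ℝ → ℝ} {g' t : ℝ}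
    (hφ : DifferentiableAt ℝ φ (a, g t)) (hg : HasDerivAt g g' t) :
    HasDerivAt (fun s => φ (a, g s)) (g' • fderiv ℝ φ (a, g t) (0, 1)) t := by
  have h := hφ.hasFDerivAt.comp_hasDerivAt t ((hasDerivAt_const t a).prodMk hg)
  rwa [show ((0, g') : ℝ × ℝ) = g' • (0, 1) by simp, map_smul] at h

theorem pdy_add_mul_pdz_eq_zero {φ : ℝ × ℝ → ℝ} {x y z : ℝ}
    (hφ : DifferentiableAt ℝ φ (x, x * y - z)) :
    pdy (fun p => φ (p.1, p.1 * p.2.1 - p.2.2)) (x, y, z) +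
      x * pdz (fun p => φ (p.1, p.1 * p.2.1 - p.2.2)) (x, y, z) = 0 := by
  have hy : HasDerivAt (fun t => x * t - z) x y := by
    simpa using ((hasDerivAt_id y).const_mul x).sub_const z
  have hz : HasDerivAt (fun t => x * y - t) (-1) z := (hasDerivAt_id z).const_sub (x * y)
  simp only [pdy, pdz, (hasDerivAt_apply_mk_right (g := fun t => x * t - z) hφ hy).deriv,
    (hasDerivAt_apply_mk_right (g := fun t => x * y - t) hφ hz).deriv, smul_eq_mul]
  ring

/-- Complete solution of the transformed Dini equation:
`v(x,y,z) = ∫₀ˣ φ(t, t·y − z) dt + ψ(y,z)` satisfies `∂_x v = φ(x, xy − z)` and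
`X₂(X₁ v) = ∂_y(∂_x v) + x·∂_z(∂_x v) = 0`. -/
theorem dini_complete_solution (φ : ℝ × ℝ → ℝ) (hφ : ContDiff ℝ 1 φ)
    (ψ : ℝ × ℝ → ℝ) (v : ℝ × ℝ × ℝ → ℝ)
    (hv : ∀ p : ℝ × ℝ × ℝ,
      v p = (∫ t in (0:ℝ)..p.1, φ (t, t * p.2.1 - p.2.2)) + ψ (p.2.1, p.2.2)) :
    (∀ p : ℝ × ℝ × ℝ, pdx v p = φ (p.1, p.1 * p.2.1 - p.2.2)) ∧
    (∀ p : ℝ × ℝ × ℝ, pdy (pdx v) p + p.1 * pdz (pdx v) p = 0) := by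
  have hpdx : ∀ p : ℝ × ℝ × ℝ, pdx v p = φ (p.1, p.1 * p.2.1 - p.2.2) :=
    pdx_eq_of_eq_intervalIntegral_add
      (g := fun t q => φ (t, t * q.1 - q.2)) (fun _ => by fun_prop) ψ hv
  refine ⟨hpdx, fun ⟨x, y, z⟩ => ?_⟩
  rw [funext hpdx]
  exact pdy_add_mul_pdz_eq_zero (hφ.differentiable one_ne_zero _)
end

section
/- Let C be an abelian category that is well-powered, and let X be an object of C. Then any two finite maximal chains of subobjects of X from ⊥ to ⊤ have equal length; precisely, if ⊥ = A₀ ⋖ A₁ ⋖ … ⋖ A_k = ⊤ and ⊥ = B₀ ⋖ B₁ ⋖ … ⋖ B_m = ⊤ are two chains in the subobject lattice Subobject X in which every step is a covering relation, then k = m (the Jordan–Hölder property for abelian categories with finite ascending chains). -/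
/-!
The subobject lattice of an object of an abelian category is modular, so it is a Jordan–Hölder
lattice and any two composition series with the same ends have the same length.
Modularity is checked with pseudoelements: if `a ≤ c` and `x ∈ (a ⊔ b) ⊓ c`, then `x` is
congruent modulo `a` to some `y ∈ b`; since `a ≤ c` also `y ∈ c`, so `x ∈ a ⊔ (b ⊓ c)`.
-/

open CategoryTheory

open Limits Abelian Pseudoelement
open scoped Pseudoelement

theorem CategoryTheory.Abelian.Pseudoelement.id_apply {C : Type*} [Category C] [Abelian C]
    {P : C} (x : Pseudoelement P) : (𝟙 P) x = x :=
  Quotient.inductionOn x fun a => by rw [pseudoApply_mk', Category.comp_id]; rfl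

namespace CategoryTheory.Subobject

variable {C : Type*} [Category C] [Abelian C] {X : C}

def pseudoelements (s : Subobject X) : Set (Pseudoelement X) :=
  Set.range s.arrow

lemma apply_mem_pseudoelements_of_factors {s : Subobject X} {P : C} {f : P ⟶ X}
    (hf : s.Factors f) (p : Pseudoelement P) : f p ∈ s.pseudoelements :=
  ⟨s.factorThru f hf p, by rw [← Pseudoelement.comp_apply, factorThru_arrow]⟩

lemma mem_pseudoelements_iff {s : Subobject X} {x : Pseudoelement X} :
    x ∈ s.pseudoelements ↔ cokernel.π s.arrow x = 0 := by
  constructor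
  · rintro ⟨y, rfl⟩
    rw [← Pseudoelement.comp_apply, cokernel.condition, Pseudoelement.zero_apply]
  · exact pseudo_exact_of_exact (ShortComplex.exact_cokernel s.arrow) x

lemma pseudoelements_subset_iff {s t : Subobject X} :
    s.pseudoelements ⊆ t.pseudoelements ↔ s ≤ t := by
  constructor
  · intro h
    have hzero : s.arrow ≫ cokernel.π t.arrow = 0 :=
      zero_morphism_ext _ fun a => by
        rw [Pseudoelement.comp_apply, ← mem_pseudoelements_iff]
        exact h ⟨a, rfl⟩
    exact le_of_comm (monoLift t.arrow s.arrow hzero) (monoLift_comp _ _ _)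
  · rintro h _ ⟨y, rfl⟩
    exact apply_mem_pseudoelements_of_factors (factors_of_le _ h (factors_self s)) y

lemma pseudoelements_inf (s t : Subobject X) :
    (s ⊓ t).pseudoelements = s.pseudoelements ∩ t.pseudoelements := by
  refine subset_antisymm (Set.subset_inter (pseudoelements_subset_iff.2 _root_.inf_le_left)
    (pseudoelements_subset_iff.2 _root_.inf_le_right)) ?_
  rintro _ ⟨⟨ys, rfl⟩, ⟨yt, hyt⟩⟩
  obtain ⟨z, hzs, -⟩ := pseudo_pullback hyt.symm
  have hfactors : (s ⊓ t).Factors (pullback.fst s.arrow t.arrow ≫ s.arrow) :=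
    (inf_factors _).2
      ⟨factors_comp_arrow _, by rw [pullback.condition]; exact factors_comp_arrow _⟩
  simpa only [Pseudoelement.comp_apply, hzs] using apply_mem_pseudoelements_of_factors hfactors z

lemma exists_biprod_desc_apply_of_mem_sup {a b : Subobject X} {x : Pseudoelement X}
    (hx : x ∈ (a ⊔ b).pseudoelements) : ∃ y, biprod.desc a.arrow b.arrow y = x := by
  set u := biprod.desc a.arrow b.arrow
  have hle : a ⊔ b ≤ imageSubobject u := sup_le
    (le_of_comm (biprod.inl ≫ factorThruImageSubobject u) (by simp [u]))
    (le_of_comm (biprod.inr ≫ factorThruImageSubobject u) (by simp [u]))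
  obtain ⟨z, rfl⟩ := pseudoelements_subset_iff.2 hle hx
  obtain ⟨y, rfl⟩ := pseudo_surjective_of_epi (factorThruImageSubobject u) z
  exact ⟨y, by rw [← Pseudoelement.comp_apply, imageSubobject_arrow_comp]⟩

-- Pseudoelements cannot be subtracted, so `x ≡ a.arrow w` modulo `b` is expressed through the
-- subobjects containing `b`.
lemma exists_mem_iff_of_mem_sup {a b : Subobject X} {x : Pseudoelement X}
    (hx : x ∈ (a ⊔ b).pseudoelements) :
    ∃ w, ∀ d : Subobject X, b ≤ d →
      (x ∈ d.pseudoelements ↔ a.arrow w ∈ d.pseudoelements) := by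
  obtain ⟨y, rfl⟩ := exists_biprod_desc_apply_of_mem_sup hx
  set p := (biprod.snd : (a : C) ⊞ (b : C) ⟶ b) y
  obtain ⟨z, hz, hzy⟩ :=
    sub_of_eq_image biprod.snd y ((biprod.inr : (b : C) ⟶ (a : C) ⊞ (b : C)) p)
    (by rw [← Pseudoelement.comp_apply, biprod.inr_snd, Pseudoelement.id_apply])
  obtain ⟨w, rfl⟩ := pseudo_exact_of_exact
    (ShortComplex.Splitting.ofHasBinaryBiproduct (a : C) (b : C)).exact z hz
  refine ⟨w, fun d hbd => ?_⟩
  have hinr : (biprod.desc a.arrow b.arrow ≫ cokernel.π d.arrow)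
      ((biprod.inr : (b : C) ⟶ (a : C) ⊞ (b : C)) p) = 0 := by
    rw [← Pseudoelement.comp_apply, biprod.inr_desc_assoc, Pseudoelement.comp_apply,
      ← mem_pseudoelements_iff]
    exact apply_mem_pseudoelements_of_factors (factors_of_le _ hbd (factors_self b)) p
  have hcongr := hzy _ _ hinr
  rw [← Pseudoelement.comp_apply, biprod.inl_desc_assoc, Pseudoelement.comp_apply,
    Pseudoelement.comp_apply] at hcongr
  rw [mem_pseudoelements_iff, mem_pseudoelements_iff, hcongr]

instance isModularLattice : IsModularLattice (Subobject X) where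
  sup_inf_le_assoc_of_le {a} b {c} hac := by
    rw [← pseudoelements_subset_iff]
    intro x hx
    rw [pseudoelements_inf, sup_comm] at hx
    obtain ⟨w, hw⟩ := exists_mem_iff_of_mem_sup hx.1
    have hwc : b.arrow w ∈ (b ⊓ c).pseudoelements := by
      rw [pseudoelements_inf]
      exact ⟨⟨w, rfl⟩, (hw c hac).1 hx.2⟩
    exact (hw _ le_sup_left).2 (pseudoelements_subset_iff.2 le_sup_right hwc)

end CategoryTheory.Subobject

universe u_1 u_2

theorem jordan_holder_abelian_category_general {C : Type u_1} [Category.{u_2} C] [Abelian C]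
    (X : C) (k m : ℕ)
    (A : Fin (k + 1) → Subobject X) (B : Fin (m + 1) → Subobject X)
    (hA0 : A 0 = ⊥) (hAl : A (Fin.last k) = ⊤)
    (hB0 : B 0 = ⊥) (hBl : B (Fin.last m) = ⊤)
    (hA : ∀ i : Fin k, A i.castSucc ⋖ A i.succ)
    (hB : ∀ i : Fin m, B i.castSucc ⋖ B i.succ) :
    k = m :=
  let s₁ : CompositionSeries (Subobject X) := ⟨k, A, hA⟩
  let s₂ : CompositionSeries (Subobject X) := ⟨m, B, hB⟩
  (CompositionSeries.jordan_holder s₁ s₂ (hA0.trans hB0.symm) (hAl.trans hBl.symm)).length_eq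

/-- Jordan–Hölder property for abelian categories: in a well-powered abelian category,
any two finite maximal chains of subobjects of an object `X` from `⊥` to `⊤`
(every step being a covering relation) have equal length. -/
theorem jordan_holder_abelian_category {C : Type u_1} [Category.{u_2} C] [Abelian C]
    [WellPowered.{u_2} C] (X : C) (k m : ℕ)
    (A : Fin (k + 1) → Subobject X) (B : Fin (m + 1) → Subobject X)
    (hA0 : A 0 = ⊥) (hAl : A (Fin.last k) = ⊤)
    (hB0 : B 0 = ⊥) (hBl : B (Fin.last m) = ⊤)
    (hA : ∀ i : Fin k, A i.castSucc ⋖ A i.succ)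
    (hB : ∀ i : Fin m, B i.castSucc ⋖ B i.succ) :
    k = m :=
  jordan_holder_abelian_category_general X k m A B hA0 hAl hB0 hBl hA hB
end
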